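/- Let J ⊆ ℝ be an open interval, v₀ ∈ J, let l : J → V be smooth with B(l(v), l(v)) = 1 for all v ∈ J, and let A : J → End(V) be smooth with A(v₀) = id and A′(v) = −A(v) ∘ (l(v) ∧ l′(v)) for all v ∈ J (the spherical evolution map along L = ⟨l⟩ based at v₀). Then for every v ∈ J: (i) B(A(v)x, A(v)y) = B(x, y) for all x, y ∈ V, so A takes values in the orthogonal group of B (a curve of Lie sphere transformations); and (ii) A(v)(l(v)) = l(v₀), i.e. the evolution map carries the line L(v) = ⟨l(v)⟩ to the fixed line L₀ = ⟨l(v₀)⟩, so that L = A⁻¹L₀. -/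

import Mathlib

noncomputable section

/-- `V6 = ℝ⁶`. -/
abbrev V6 : Type := Fin 6 → ℝ

/-- The symmetric bilinear form of signature (4,2) on `V6`. -/
def bB6 (x y : V6) : ℝ :=
  x 0 * y 0 + x 1 * y 1 + x 2 * y 2 + x 3 * y 3 - x 4 * y 4 - x 5 * y 5

/-- The skew-symmetric endomorphism `a ∧ b` of `V6`. -/
def wedge6 (a b : V6) : V6 →L[ℝ] V6 :=
  LinearMap.toContinuousLinearMap
    { toFun := fun x => bB6 a x • b - bB6 b x • a
      map_add' := by
        intro x y
        have h1 : bB6 a (x + y) = bB6 a x + bB6 a y := by simp [bB6]; ring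
        have h2 : bB6 b (x + y) = bB6 b x + bB6 b y := by simp [bB6]; ring
        try dsimp only
        rw [h1, h2]; module
      map_smul' := by
        intro c x
        have h1 : bB6 a (c • x) = c * bB6 a x := by simp [bB6]; ring
        have h2 : bB6 b (c • x) = c * bB6 b x := by simp [bB6]; ring
        try dsimp only
        rw [h1, h2]
        simp only [RingHom.id_apply]
        module }

open Set

lemma bB6_add_left (x y z : V6) : bB6 (x + y) z = bB6 x z + bB6 y z := by simp [bB6]; ring
lemma bB6_smul_left (c : ℝ) (x z : V6) : bB6 (c • x) z = c * bB6 x z := by simp [bB6]; ring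
lemma bB6_sub_left (x y z : V6) : bB6 (x - y) z = bB6 x z - bB6 y z := by simp [bB6]; ring
lemma bB6_add_right (x y z : V6) : bB6 x (y + z) = bB6 x y + bB6 x z := by simp [bB6]; ring
lemma bB6_smul_right (c : ℝ) (x z : V6) : bB6 x (c • z) = c * bB6 x z := by simp [bB6]; ring
lemma bB6_comm (x y : V6) : bB6 x y = bB6 y x := by simp [bB6]; ring

def e6 (j : Fin 6) : V6 := fun k => if k = j then 1 else 0

def eps6 (j : Fin 6) : ℝ := if (j : ℕ) < 4 then 1 else -1

lemma V6_decomp (x : V6) :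
    x = x 0 • e6 0 + x 1 • e6 1 + x 2 • e6 2 + x 3 • e6 3 + x 4 • e6 4 + x 5 • e6 5 := by
  funext k
  fin_cases k <;> simp [e6]

lemma bB6_e6 (j : Fin 6) (z : V6) : bB6 (e6 j) z = eps6 j * z j := by
  fin_cases j <;> simp [bB6, e6, eps6] <;> ring

lemma bB6_cancel {z w : V6} (h : ∀ x, bB6 x z = bB6 x w) : z = w := by
  funext j
  have := h (e6 j)
  rw [bB6_e6, bB6_e6] at this
  have he : eps6 j ≠ 0 := by fin_cases j <;> norm_num [eps6]
  exact mul_left_cancel₀ he this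

def adjL : (V6 →L[ℝ] V6) →ₗ[ℝ] (V6 →L[ℝ] V6) where
  toFun T := LinearMap.toContinuousLinearMap
    { toFun := fun y j => eps6 j * bB6 (T (e6 j)) y
      map_add' := by
        intro y z; funext j; simp only [bB6_add_right, Pi.add_apply]; ring
      map_smul' := by
        intro c y; funext j; simp only [bB6_smul_right, RingHom.id_apply, Pi.smul_apply,
          smul_eq_mul]; ring }
  map_add' := by
    intro T U
    ext y j
    simp [bB6_add_left]
    ring
  map_smul' := by
    intro c T
    ext y j
    simp [bB6_smul_left]
    ring

lemma adjL_apply (T : V6 →L[ℝ] V6) (y : V6) (j : Fin 6) :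
    adjL T y j = eps6 j * bB6 (T (e6 j)) y := rfl

lemma adjL_spec (T : V6 →L[ℝ] V6) (x y : V6) : bB6 (T x) y = bB6 x (adjL T y) := by
  conv_lhs => rw [V6_decomp x]
  simp only [map_add, map_smul, bB6_add_left, bB6_smul_left]
  simp only [bB6, adjL_apply, eps6]
  norm_num [show ((0:Fin 6):ℕ) = 0 from rfl, show ((1:Fin 6):ℕ) = 1 from rfl,
    show ((2:Fin 6):ℕ) = 2 from rfl, show ((3:Fin 6):ℕ) = 3 from rfl,
    show ((4:Fin 6):ℕ) = 4 from rfl, show ((5:Fin 6):ℕ) = 5 from rfl]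
  ring

lemma wedge6_apply (a b x : V6) : wedge6 a b x = bB6 a x • b - bB6 b x • a := rfl

lemma adjL_one : adjL 1 = 1 := by
  refine ContinuousLinearMap.ext fun y => bB6_cancel fun x => ?_
  rw [← adjL_spec]
  simp

lemma adjL_mul (T U : V6 →L[ℝ] V6) : adjL (T * U) = adjL U * adjL T := by
  refine ContinuousLinearMap.ext fun y => bB6_cancel fun x => ?_
  rw [← adjL_spec]
  show bB6 (T (U x)) y = bB6 x (adjL U (adjL T y))
  rw [adjL_spec T, adjL_spec U]

lemma adjL_wedge (a b : V6) : adjL (wedge6 a b) = -(wedge6 a b) := by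
  refine ContinuousLinearMap.ext fun y => bB6_cancel fun x => ?_
  rw [← adjL_spec]
  show bB6 (wedge6 a b x) y = bB6 x (-(wedge6 a b y))
  rw [wedge6_apply, wedge6_apply]
  have : -(bB6 a y • b - bB6 b y • a) = bB6 b y • a - bB6 a y • b := by module
  rw [this, bB6_sub_left, bB6_smul_left, bB6_smul_left]
  have h1 : bB6 x (bB6 b y • a - bB6 a y • b) = bB6 b y * bB6 x a - bB6 a y * bB6 x b := by
    have : bB6 b y • a - bB6 a y • b = bB6 b y • a + (-(bB6 a y)) • b := by module
    rw [this, bB6_add_right, bB6_smul_right, bB6_smul_right]; ring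
  rw [h1, bB6_comm x a, bB6_comm x b, bB6_comm b y, bB6_comm a y]
  ring

def adjC : (V6 →L[ℝ] V6) →L[ℝ] (V6 →L[ℝ] V6) := LinearMap.toContinuousLinearMap adjL

lemma adjC_apply (T : V6 →L[ℝ] V6) : adjC T = adjL T := rfl

lemma bB6_bound (x y : V6) : |bB6 x y| ≤ 6 * ‖x‖ * ‖y‖ := by
  have hx : ∀ i, |x i| ≤ ‖x‖ := fun i => by
    simpa [Real.norm_eq_abs] using norm_le_pi_norm x i
  have hy : ∀ i, |y i| ≤ ‖y‖ := fun i => by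
    simpa [Real.norm_eq_abs] using norm_le_pi_norm y i
  have key : ∀ i : Fin 6, |x i * y i| ≤ ‖x‖ * ‖y‖ := fun i => by
    rw [abs_mul]
    exact mul_le_mul (hx i) (hy i) (abs_nonneg _) (norm_nonneg _)
  have h0 := abs_le.mp (key 0); have h1 := abs_le.mp (key 1)
  have h2 := abs_le.mp (key 2); have h3 := abs_le.mp (key 3)
  have h4 := abs_le.mp (key 4); have h5 := abs_le.mp (key 5)
  rw [abs_le, bB6]
  constructor <;> nlinarith [h0.1, h0.2, h1.1, h1.2, h2.1, h2.2, h3.1, h3.2, h4.1, h4.2, h5.1, h5.2]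

lemma wedge6_norm_le (a b : V6) : ‖wedge6 a b‖ ≤ 12 * ‖a‖ * ‖b‖ := by
  refine ContinuousLinearMap.opNorm_le_bound _ (by positivity) fun x => ?_
  rw [wedge6_apply]
  calc ‖bB6 a x • b - bB6 b x • a‖ ≤ ‖bB6 a x • b‖ + ‖bB6 b x • a‖ := norm_sub_le _ _
    _ = |bB6 a x| * ‖b‖ + |bB6 b x| * ‖a‖ := by
        rw [norm_smul, norm_smul, Real.norm_eq_abs, Real.norm_eq_abs]
    _ ≤ (6 * ‖a‖ * ‖x‖) * ‖b‖ + (6 * ‖b‖ * ‖x‖) * ‖a‖ := by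
        gcongr <;> [exact bB6_bound a x; exact bB6_bound b x]
    _ = 12 * ‖a‖ * ‖b‖ * ‖x‖ := by ring

lemma lip_aux (Wt : V6 →L[ℝ] V6) (C : ℝ) (hW : ‖Wt‖ ≤ C) :
    LipschitzOnWith (Real.toNNReal (2*C)) (fun X : V6 →L[ℝ] V6 => Wt * X - X * Wt) univ := by
  apply LipschitzWith.lipschitzOnWith
  apply LipschitzWith.of_dist_le_mul
  intro X Y
  rw [dist_eq_norm, dist_eq_norm]
  have hid : (Wt*X - X*Wt) - (Wt*Y - Y*Wt) = Wt*(X-Y) - (X-Y)*Wt := by rw [mul_sub, sub_mul]; abel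
  rw [hid]
  have h1 : ‖Wt*(X-Y) - (X-Y)*Wt‖ ≤ ‖Wt‖*‖X-Y‖ + ‖X-Y‖*‖Wt‖ :=
    (norm_sub_le _ _).trans (add_le_add (norm_mul_le _ _) (norm_mul_le _ _))
  have hC : (0:ℝ) ≤ C := le_trans (norm_nonneg _) hW
  have hcoe : (Real.toNNReal (2*C) : ℝ) = 2*C := Real.coe_toNNReal _ (by linarith)
  rw [hcoe]
  nlinarith [norm_nonneg (X - Y), norm_nonneg Wt]

lemma ode_const_right {a b : ℝ} (hab : a ≤ b) {Wf : ℝ → (V6 →L[ℝ] V6)} {C : ℝ}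
    (hWb : ∀ t ∈ Icc a b, ‖Wf t‖ ≤ C)
    {S : ℝ → (V6 →L[ℝ] V6)}
    (hSd : ∀ t ∈ Icc a b, HasDerivAt S (Wf t * S t - S t * Wf t) t)
    (hSa : S a = 1) : S b = 1 := by
  set p : ℝ → ℝ := fun t => max a (min t b) with hp
  have hpmem : ∀ t, p t ∈ Icc a b := fun t => ⟨le_max_left _ _, max_le hab (min_le_right _ _)⟩
  have hpeq : ∀ t ∈ Icc a b, p t = t := fun t ht => by
    simp only [hp, min_eq_left ht.2, max_eq_right ht.1]
  have hv : ∀ t, LipschitzOnWith (Real.toNNReal (2*C))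
      (fun X : V6 →L[ℝ] V6 => Wf (p t) * X - X * Wf (p t)) (univ : Set (V6 →L[ℝ] V6)) :=
    fun t => lip_aux _ _ (hWb _ (hpmem t))
  have heq := ODE_solution_unique_of_mem_Icc_right (fun t _ => hv t)
    (fun t ht => (hSd t ht).continuousAt.continuousWithinAt)
    (fun t ht => by
      have h := (hSd t (Ico_subset_Icc_self ht)).hasDerivWithinAt (s := Ici t)
      rw [hpeq t (Ico_subset_Icc_self ht)]
      exact h)
    (fun t _ => mem_univ _)
    (continuousOn_const : ContinuousOn (fun _ : ℝ => (1 : V6 →L[ℝ] V6)) (Icc a b))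
    (fun t ht => by
      have h0 : Wf (p t) * (1 : V6 →L[ℝ] V6) - (1 : V6 →L[ℝ] V6) * Wf (p t) = 0 := by
        simp
      rw [h0]
      exact (hasDerivWithinAt_const t _ _))
    (fun t _ => mem_univ _)
    (by simpa using hSa)
  have := heq (right_mem_Icc.mpr hab)
  simpa using this

lemma ode_const_left {a b : ℝ} (hab : a ≤ b) {Wf : ℝ → (V6 →L[ℝ] V6)} {C : ℝ}
    (hWb : ∀ t ∈ Icc a b, ‖Wf t‖ ≤ C)
    {S : ℝ → (V6 →L[ℝ] V6)}
    (hSd : ∀ t ∈ Icc a b, HasDerivAt S (Wf t * S t - S t * Wf t) t)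
    (hSb : S b = 1) : S a = 1 := by
  set p : ℝ → ℝ := fun t => max a (min t b) with hp
  have hpmem : ∀ t, p t ∈ Icc a b := fun t => ⟨le_max_left _ _, max_le hab (min_le_right _ _)⟩
  have hpeq : ∀ t ∈ Icc a b, p t = t := fun t ht => by
    simp only [hp, min_eq_left ht.2, max_eq_right ht.1]
  have hv : ∀ t, LipschitzOnWith (Real.toNNReal (2*C))
      (fun X : V6 →L[ℝ] V6 => Wf (p t) * X - X * Wf (p t)) (univ : Set (V6 →L[ℝ] V6)) :=
    fun t => lip_aux _ _ (hWb _ (hpmem t))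
  have heq := ODE_solution_unique_of_mem_Icc_left (fun t _ => hv t)
    (fun t ht => (hSd t ht).continuousAt.continuousWithinAt)
    (fun t ht => by
      have h := (hSd t (Ioc_subset_Icc_self ht)).hasDerivWithinAt (s := Iic t)
      rw [hpeq t (Ioc_subset_Icc_self ht)]
      exact h)
    (fun t _ => mem_univ _)
    (continuousOn_const : ContinuousOn (fun _ : ℝ => (1 : V6 →L[ℝ] V6)) (Icc a b))
    (fun t ht => by
      have h0 : Wf (p t) * (1 : V6 →L[ℝ] V6) - (1 : V6 →L[ℝ] V6) * Wf (p t) = 0 := by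
        simp
      rw [h0]
      exact (hasDerivWithinAt_const t _ _))
    (fun t _ => mem_univ _)
    (by simpa using hSb)
  have := heq (left_mem_Icc.mpr hab)
  simpa using this


/-- the spherical evolution map `A` along `L = ⟨l⟩` based at `v₀` takes values
in the orthogonal group of `B` and carries `l(v)` to `l(v₀)`. -/
theorem stmt14 (J : Set ℝ) (hJo : IsOpen J) (hJc : J.OrdConnected)
    (v₀ : ℝ) (hv₀ : v₀ ∈ J)
    (l : ℝ → V6) (hl : ContDiffOn ℝ (⊤ : ℕ∞) l J)
    (hunit : ∀ v ∈ J, bB6 (l v) (l v) = 1)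
    (A : ℝ → V6 →L[ℝ] V6) (hA : ContDiffOn ℝ (⊤ : ℕ∞) A J)
    (hA0 : A v₀ = ContinuousLinearMap.id ℝ V6)
    (hA' : ∀ v ∈ J, deriv A v = -((A v).comp (wedge6 (l v) (deriv l v)))) :
    ∀ v ∈ J, (∀ x y : V6, bB6 (A v x) (A v y) = bB6 x y) ∧ A v (l v) = l v₀ := by
  classical
  have hconv : Convex ℝ J := hJc.convex
  have hAd : ∀ v ∈ J, HasDerivAt A (deriv A v) v := fun v hv =>
    ((hA.differentiableOn (by simp)).differentiableAt
      (hJo.mem_nhds hv)).hasDerivAt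
  have hld : ∀ v ∈ J, HasDerivAt l (deriv l v) v := fun v hv =>
    ((hl.differentiableOn (by simp)).differentiableAt
      (hJo.mem_nhds hv)).hasDerivAt
  -- l ⊥ l'
  have horth : ∀ v ∈ J, bB6 (l v) (deriv l v) = 0 := by
    intro v hv
    have hli : ∀ i : Fin 6, HasDerivAt (fun t => l t i) (deriv l v i) v := fun i =>
      (ContinuousLinearMap.proj (R := ℝ) (φ := fun _ : Fin 6 => ℝ) i).hasFDerivAt.comp_hasDerivAt
        v (hld v hv)
    have hg : HasDerivAt (fun t => bB6 (l t) (l t))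
        ((deriv l v 0 * l v 0 + l v 0 * deriv l v 0)
        + (deriv l v 1 * l v 1 + l v 1 * deriv l v 1)
        + (deriv l v 2 * l v 2 + l v 2 * deriv l v 2)
        + (deriv l v 3 * l v 3 + l v 3 * deriv l v 3)
        - (deriv l v 4 * l v 4 + l v 4 * deriv l v 4)
        - (deriv l v 5 * l v 5 + l v 5 * deriv l v 5)) v := by
      simp only [bB6]
      exact ((((((hli 0).mul (hli 0)).add ((hli 1).mul (hli 1))).add
        ((hli 2).mul (hli 2))).add ((hli 3).mul (hli 3))).sub
        ((hli 4).mul (hli 4))).sub ((hli 5).mul (hli 5))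
    have hev : (fun t => bB6 (l t) (l t)) =ᶠ[nhds v] fun _ => (1:ℝ) := by
      filter_upwards [hJo.mem_nhds hv] with t ht using hunit t ht
    have hconst : HasDerivAt (fun t => bB6 (l t) (l t)) 0 v :=
      (hasDerivAt_const v (1:ℝ)).congr_of_eventuallyEq hev
    have huniq := hconst.unique hg
    simp only [bB6]
    linarith [huniq]
  -- wedge applied to l
  have hWl : ∀ v ∈ J, wedge6 (l v) (deriv l v) (l v) = deriv l v := by
    intro v hv
    rw [wedge6_apply, hunit v hv, bB6_comm, horth v hv]
    simp
  -- the quadratic invariant S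
  set S : ℝ → V6 →L[ℝ] V6 := fun v => adjC (A v) * A v with hSdef
  have hSd : ∀ v ∈ J, HasDerivAt S
      (wedge6 (l v) (deriv l v) * S v - S v * wedge6 (l v) (deriv l v)) v := by
    intro v hv
    have h1 : HasDerivAt (fun t => adjC (A t)) (adjC (deriv A v)) v :=
      adjC.hasFDerivAt.comp_hasDerivAt v (hAd v hv)
    have h2 := h1.mul (hAd v hv)
    convert h2 using 1
    case e'_4 | e'_5 | e'_6 | e'_8 => rfl
    rw [hA' v hv]
    have hcomp : (A v).comp (wedge6 (l v) (deriv l v)) = A v * wedge6 (l v) (deriv l v) := rfl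
    rw [hSdef]
    simp only [hcomp, map_neg, adjC_apply, adjL_mul, adjL_wedge]
    rw [neg_mul (wedge6 (l v) (deriv l v)) (adjL (A v)), neg_neg,
      mul_neg (adjL (A v)) (A v * wedge6 (l v) (deriv l v)),
      mul_assoc (wedge6 (l v) (deriv l v)) (adjL (A v)) (A v),
      mul_assoc (adjL (A v)) (A v) (wedge6 (l v) (deriv l v)), sub_eq_add_neg]
  have hS0 : S v₀ = 1 := by
    rw [hSdef]
    simp only [hA0]
    rw [show (ContinuousLinearMap.id ℝ V6) = (1 : V6 →L[ℝ] V6) from rfl, adjC_apply, adjL_one,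
      mul_one]
  have key : ∀ v ∈ J, S v = 1 := by
    intro v hv
    rcases le_total v₀ v with hc | hc
    · have hsub : Icc v₀ v ⊆ J := hJc.out hv₀ hv
      obtain ⟨C1, hC1⟩ := (isCompact_Icc (a := v₀) (b := v)).exists_bound_of_continuousOn
        (hl.continuousOn.mono hsub)
      obtain ⟨C2, hC2⟩ := (isCompact_Icc (a := v₀) (b := v)).exists_bound_of_continuousOn
        ((hl.continuousOn_deriv_of_isOpen hJo (by exact_mod_cast le_top)).mono hsub)
      refine ode_const_right hc (Wf := fun t => wedge6 (l t) (deriv l t)) (C := 12 * C1 * C2)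
        (fun t ht => ?_) (fun t ht => hSd t (hsub ht)) hS0
      calc ‖wedge6 (l t) (deriv l t)‖ ≤ 12 * ‖l t‖ * ‖deriv l t‖ := wedge6_norm_le _ _
        _ ≤ 12 * C1 * C2 := by
            have e1 := hC1 t ht
            have e2 := hC2 t ht
            nlinarith [norm_nonneg (l t), norm_nonneg (deriv l t)]
    · have hsub : Icc v v₀ ⊆ J := hJc.out hv hv₀
      obtain ⟨C1, hC1⟩ := (isCompact_Icc (a := v) (b := v₀)).exists_bound_of_continuousOn
        (hl.continuousOn.mono hsub)
      obtain ⟨C2, hC2⟩ := (isCompact_Icc (a := v) (b := v₀)).exists_bound_of_continuousOn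
        ((hl.continuousOn_deriv_of_isOpen hJo (by exact_mod_cast le_top)).mono hsub)
      refine ode_const_left hc (Wf := fun t => wedge6 (l t) (deriv l t)) (C := 12 * C1 * C2)
        (fun t ht => ?_) (fun t ht => hSd t (hsub ht)) hS0
      calc ‖wedge6 (l t) (deriv l t)‖ ≤ 12 * ‖l t‖ * ‖deriv l t‖ := wedge6_norm_le _ _
        _ ≤ 12 * C1 * C2 := by
            have e1 := hC1 t ht
            have e2 := hC2 t ht
            nlinarith [norm_nonneg (l t), norm_nonneg (deriv l t)]
  intro v hv
  constructor
  · intro x y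
    have h1 : bB6 (A v x) (A v y) = bB6 x (adjL (A v) (A v y)) := adjL_spec _ _ _
    have h2 : adjL (A v) (A v y) = S v y := rfl
    rw [h1, h2, key v hv]
    simp
  · have hfd : ∀ w ∈ J, HasDerivAt (fun t => A t (l t)) 0 w := by
      intro w hw
      have h := (hAd w hw).clm_apply (hld w hw)
      rw [hA' w hw] at h
      convert h using 1
      case e'_4 | e'_5 | e'_6 => rfl
      simp [hWl w hw]
    have hdiff : DifferentiableOn ℝ (fun t => A t (l t)) J := fun w hw =>
      ((hfd w hw).differentiableAt).differentiableWithinAt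
    have hzero : ∀ w ∈ J, fderivWithin ℝ (fun t => A t (l t)) J w = 0 := by
      intro w hw
      have hF := (hfd w hw).hasFDerivAt.fderiv
      rw [fderivWithin_of_isOpen hJo hw, hF]
      ext t
      simp
    have hc := hconv.is_const_of_fderivWithin_eq_zero hdiff hzero hv hv₀
    simpa [hA0] using hc
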